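/- Arm-wise high-probability bound: under the setup of the previous statement with β ∈ (0,1] and δ ∈ (0,1), for each fixed π ∈ Π, with probability at least 1 − δ, Σ_{t=1}^T g_t(π) ≤ Σ_{t=1}^T g̃_t(π) + ln(1/δ)/β, where g̃_t(π) = (g_t(π) 1{π_t=π} + β)/p_t(π). -/

import Mathlib

/-
Fix `π` and put `f_t = exp (β g_t(π) - β g̃_t(π))`. Given the history, with `a = g_t(π)` and
`q = p_t(π)`, the expectation of `f_t` is `exp (β a - β²/q) (1 - q + q exp (-β a / q))`, and
`exp (-y) ≤ 1 - y + y²/2` bounds it by `exp (β² (a²/2 - 1) / q) ≤ 1`. Hence the product of the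
`f_t` along a path has expectation at most `1` under the path law, while on the bad event it is at
least `1/δ`; Markov's inequality gives the bound `δ`.
-/

/-- The history (prefix of length `t`) of a path `ω` of arm choices. -/
def res {ι : Type*} {T : ℕ} (ω : Fin T → ι) (t : Fin T) : Fin (t : ℕ) → ι :=
  fun i => ω ⟨i, i.isLt.trans t.isLt⟩

open Finset

section
open Real

theorem Real.exp_neg_le_one_sub_add_sq_div_two {x : ℝ} (hx : 0 ≤ x) :
    exp (-x) ≤ 1 - x + x ^ 2 / 2 := by
  rw [exp_neg, inv_le_iff_one_le_mul₀ (exp_pos x)]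
  -- `(1 + x + x²/2)(1 - x + x²/2) = 1 + x⁴/4`
  calc (1 : ℝ) ≤ (1 - x + x ^ 2 / 2) * (1 + x + x ^ 2 / 2) := by nlinarith [pow_nonneg hx 4]
    _ ≤ (1 - x + x ^ 2 / 2) * exp x := by
      gcongr
      · nlinarith [sq_nonneg (x - 1)]
      · exact quadratic_le_exp_of_nonneg hx

theorem Real.one_sub_add_mul_exp_neg_le {q y : ℝ} (hq : 0 ≤ q) (hy : 0 ≤ y) :
    1 - q + q * exp (-y) ≤ exp (-(q * y) + q * y ^ 2 / 2) :=
  calc 1 - q + q * exp (-y) ≤ 1 - q + q * (1 - y + y ^ 2 / 2) := by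
        gcongr; exact exp_neg_le_one_sub_add_sq_div_two hy
    _ = -(q * y) + q * y ^ 2 / 2 + 1 := by ring
    _ ≤ exp (-(q * y) + q * y ^ 2 / 2) := add_one_le_exp _

theorem sum_mul_exp_sub_importanceWeighted_le_one {ι : Type*} [Fintype ι] [DecidableEq ι]
    {p : ι → ℝ} (hp_sum : ∑ i, p i = 1) {j : ι} (hj : 0 < p j) {a β : ℝ}
    (ha0 : 0 ≤ a) (ha1 : a ≤ 1) (hβ : 0 ≤ β) :
    ∑ i, p i * exp (β * a - β * ((a * (if i = j then 1 else 0) + β) / p j)) ≤ 1 := by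
  set q := p j
  set E := exp (β * a - β ^ 2 / q)
  have hsplit : ∑ i, p i * exp (β * a - β * ((a * (if i = j then 1 else 0) + β) / q))
      = E * (1 - q + q * exp (-(β * a / q))) := by
    rw [← add_sum_erase _ _ (mem_univ j),
      sum_congr rfl fun i hi => by rw [if_neg (ne_of_mem_erase hi)], ← sum_mul,
      sum_erase_eq_sub (mem_univ j), hp_sum, if_pos rfl]
    have h_pulled : exp (β * a - β * ((a * 1 + β) / q)) = E * exp (-(β * a / q)) := by
      rw [← exp_add]; congr 1; field_simp; ring
    have h_unpulled : exp (β * a - β * ((a * 0 + β) / q)) = E := by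
      congr 1; field_simp; ring
    rw [h_pulled, h_unpulled]
    ring
  rw [hsplit]
  calc E * (1 - q + q * exp (-(β * a / q)))
      ≤ E * exp (-(q * (β * a / q)) + q * (β * a / q) ^ 2 / 2) := by
        gcongr; exact one_sub_add_mul_exp_neg_le hj.le (by positivity)
    _ = exp (β ^ 2 * (a ^ 2 - 2) / (2 * q)) := by
        rw [← exp_add]; congr 1; field_simp; ring
    _ ≤ 1 := by
        apply exp_le_one_iff.mpr
        apply div_nonpos_of_nonpos_of_nonneg _ (by positivity)
        exact mul_nonpos_of_nonneg_of_nonpos (sq_nonneg β) (by nlinarith)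

theorem res_snoc_castSucc {ι : Type*} {n : ℕ} (ω : Fin n → ι) (x : ι) (t : Fin n) :
    res (Fin.snoc ω x : Fin (n + 1) → ι) t.castSucc = res ω t :=
  funext fun i => Fin.snoc_castSucc (α := fun _ => ι) (i := ⟨i, i.isLt.trans t.isLt⟩) ..

theorem res_snoc_last {ι : Type*} {n : ℕ} (ω : Fin n → ι) (x : ι) :
    res (Fin.snoc ω x : Fin (n + 1) → ι) (Fin.last n) = ω :=
  funext fun i => Fin.snoc_castSucc (α := fun _ => ι) (i := i) ..

theorem sum_prod_res_le_one {ι : Type*} [Fintype ι] {T : ℕ}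
    (w : (t : Fin T) → (Fin t → ι) → ι → ℝ) (hw0 : ∀ t h i, 0 ≤ w t h i)
    (hw : ∀ t h, ∑ i, w t h i ≤ 1) :
    ∑ ω : Fin T → ι, ∏ t, w t (res ω t) (ω t) ≤ 1 := by
  induction T with
  | zero => simp
  | succ n ih =>
    rw [← (Fin.snocEquiv fun _ => ι).sum_comp, Fintype.sum_prod_type, sum_comm]
    refine (sum_le_sum fun ω _ => ?_).trans
      (ih (fun t => w t.castSucc) (fun _ _ _ => hw0 _ _ _) fun _ _ => hw _ _)
    simp only [Fin.snocEquiv, Equiv.coe_fn_mk, Fin.prod_univ_castSucc, res_snoc_castSucc,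
      res_snoc_last, Fin.snoc_castSucc, Fin.snoc_last, ← mul_sum]
    exact mul_le_of_le_one_right (prod_nonneg fun _ _ => hw0 _ _ _) (hw _ _)

theorem Finset.sum_filter_le_sum_mul_div {α : Type*} [Fintype α] (P : α → Prop) [DecidablePred P]
    {w F : α → ℝ} {c : ℝ} (hc : 0 < c) (hw : ∀ ω, 0 ≤ w ω) (hF : ∀ ω, 0 ≤ F ω)
    (hPF : ∀ ω, P ω → c ≤ F ω) :
    ∑ ω ∈ univ.filter P, w ω ≤ (∑ ω, w ω * F ω) / c := by
  rw [le_div_iff₀ hc, sum_mul]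
  calc ∑ ω ∈ univ.filter P, w ω * c ≤ ∑ ω ∈ univ.filter P, w ω * F ω :=
        sum_le_sum fun ω hω => mul_le_mul_of_nonneg_left (hPF ω (mem_filter.mp hω).2) (hw ω)
    _ ≤ ∑ ω, w ω * F ω :=
        sum_le_sum_of_subset_of_nonneg (filter_subset _ _) fun ω _ _ => mul_nonneg (hw ω) (hF ω)

theorem Real.one_div_le_exp_of_not_le_add_log_div {x y β δ : ℝ} (hβ : 0 < β) (hδ : 0 < δ)
    (h : ¬ x ≤ y + log (1 / δ) / β) : 1 / δ ≤ exp (β * x - β * y) := by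
  rw [← exp_log (one_div_pos.mpr hδ)]
  apply exp_le_exp.mpr
  have h' : log (1 / δ) / β < x - y := by linarith [not_le.mp h]
  rw [div_lt_iff₀ hβ] at h'
  linarith

end

open Classical in
theorem exp3p_armwise_high_probability_bound_general {ι : Type*} [Fintype ι] [DecidableEq ι] (T : ℕ)
    (p : (t : Fin T) → (Fin (t : ℕ) → ι) → ι → ℝ)
    (hp_pos : ∀ t h i, 0 < p t h i)
    (hp_sum : ∀ t h, ∑ i, p t h i = 1)
    (g : (t : Fin T) → (Fin (t : ℕ) → ι) → ι → ℝ)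
    (hg : ∀ t h i, g t h i ∈ Set.Icc (0:ℝ) 1)
    (β : ℝ) (hβ0 : 0 < β)
    (δ : ℝ) (hδ0 : 0 < δ) (π : ι) :
    ∑ ω ∈ Finset.univ.filter (fun ω : Fin T → ι =>
        ¬ (∑ t, g t (res ω t) π
            ≤ (∑ t, (g t (res ω t) π * (if ω t = π then 1 else 0) + β) / p t (res ω t) π)
              + Real.log (1 / δ) / β)),
      (∏ t, p t (res ω t) (ω t)) ≤ δ := by
  let f : (t : Fin T) → (Fin t → ι) → ι → ℝ := fun t h i =>
    Real.exp (β * g t h π - β * ((g t h π * (if i = π then 1 else 0) + β) / p t h π))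
  have h_path_prob_nonneg : ∀ ω : Fin T → ι, 0 ≤ ∏ t, p t (res ω t) (ω t) :=
    fun ω => prod_nonneg fun t _ => (hp_pos ..).le
  have h_expected_weight : ∑ ω, (∏ t, p t (res ω t) (ω t)) * ∏ t, f t (res ω t) (ω t) ≤ 1 := by
    simpa only [← prod_mul_distrib] using
      sum_prod_res_le_one (fun t h i => p t h i * f t h i)
        (fun t h i => mul_nonneg (hp_pos t h i).le (Real.exp_pos _).le) fun t h =>
          sum_mul_exp_sub_importanceWeighted_le_one (hp_sum t h) (hp_pos t h π) (hg t h π).1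
            (hg t h π).2 hβ0.le
  calc _ ≤ (∑ ω, (∏ t, p t (res ω t) (ω t)) * ∏ t, f t (res ω t) (ω t)) / (1 / δ) := by
        refine sum_filter_le_sum_mul_div _ (by positivity) h_path_prob_nonneg
          (fun ω => prod_nonneg fun t _ => (Real.exp_pos _).le) fun ω h_bad => ?_
        rw [← Real.exp_sum, sum_sub_distrib, ← mul_sum, ← mul_sum]
        exact Real.one_div_le_exp_of_not_le_add_log_div hβ0 hδ0 h_bad
    _ ≤ 1 / (1 / δ) := by gcongr
    _ = δ := one_div_one_div δ

open Classical in
theorem exp3p_armwise_high_probability_bound {ι : Type*} [Fintype ι] [DecidableEq ι] (T : ℕ)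
    (p : (t : Fin T) → (Fin (t : ℕ) → ι) → ι → ℝ)
    (hp_pos : ∀ t h i, 0 < p t h i)
    (hp_sum : ∀ t h, ∑ i, p t h i = 1)
    (g : (t : Fin T) → (Fin (t : ℕ) → ι) → ι → ℝ)
    (hg : ∀ t h i, g t h i ∈ Set.Icc (0:ℝ) 1)
    (β : ℝ) (hβ0 : 0 < β) (hβ1 : β ≤ 1)
    (δ : ℝ) (hδ0 : 0 < δ) (hδ1 : δ < 1) (π : ι) :
    ∑ ω ∈ Finset.univ.filter (fun ω : Fin T → ι =>
        ¬ (∑ t, g t (res ω t) π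
            ≤ (∑ t, (g t (res ω t) π * (if ω t = π then 1 else 0) + β) / p t (res ω t) π)
              + Real.log (1 / δ) / β)),
      (∏ t, p t (res ω t) (ω t)) ≤ δ :=
  exp3p_armwise_high_probability_bound_general T p hp_pos hp_sum g hg β hβ0 δ hδ0 π
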